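/- arXiv:0711.2400 — 3 statements merged into one kernel-verified Lean document; each statement's English description precedes it below -/
import Mathlib

section
/- Let Ω be a set and C a semi-algebra on Ω (a set semi-ring with Ω ∈ C), and let F = σ(C). Then for every ω ∈ Ω, the atom of F containing ω equals the intersection of all members of C containing ω: A_F(ω) = A_C(ω). -/
open MeasureTheory Classical

variable {Ω : Type*}

/-- The intersection of all members of `C` containing `ω`, with the convention
that it is `∅` when no member of `C` contains `ω`. -/
noncomputable def atomOf (C : Set (Set Ω)) (ω : Ω) : Set Ω :=
  if ∃ B ∈ C, ω ∈ B then ⋂₀ {B | B ∈ C ∧ ω ∈ B} else ∅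

/-- `C_σ` : the collection of all countable unions of members of `C`. -/
def sigmaUnions (C : Set (Set Ω)) : Set (Set Ω) :=
  {A | ∃ f : ℕ → Set Ω, (∀ n, f n ∈ C) ∧ A = ⋃ n, f n}

/-- `C_σδ` : the collection of all countable intersections of members of `C_σ`. -/
def sigmaDelta (C : Set (Set Ω)) : Set (Set Ω) :=
  {A | ∃ f : ℕ → Set Ω, (∀ n, f n ∈ sigmaUnions C) ∧ A = ⋂ n, f n}

/-- A κ class: closed under countable (nonempty) unions and intersections. -/
def IsKappaClass (K : Set (Set Ω)) : Prop :=
  (∀ f : ℕ → Set Ω, (∀ n, f n ∈ K) → (⋃ n, f n) ∈ K) ∧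
  (∀ f : ℕ → Set Ω, (∀ n, f n ∈ K) → (⋂ n, f n) ∈ K)

/-- `κ(C)` : the smallest κ class containing `C`. -/
def kappa (C : Set (Set Ω)) : Set (Set Ω) :=
  ⋂₀ {K | IsKappaClass K ∧ C ⊆ K}

/-- `σ(C)` viewed as the collection of its measurable sets. -/
def sigmaSets (C : Set (Set Ω)) : Set (Set Ω) :=
  {s | MeasurableSet[MeasurableSpace.generateFrom C] s}

/-! Atoms are computed with the sets that do not separate `ω` from a point `x`: for fixed `x` and
`ω` they form a σ-algebra, so if no member of `C` separates them, neither does any member of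
`σ(C)`. For a semi-algebra, a member `B ∌ ω` of `C` cannot separate `ω` from a point `x` of the
`C`-atom either, since `ω` lies in a member of `C` inside `Bᶜ`, which then contains `x`. -/

theorem mem_atomOf_iff {C : Set (Set Ω)} {ω x : Ω} (h : ∃ B ∈ C, ω ∈ B) :
    x ∈ atomOf C ω ↔ ∀ B ∈ C, ω ∈ B → x ∈ B := by
  simp [atomOf, if_pos h]

abbrev MeasurableSpace.nonSeparating (x y : Ω) : MeasurableSpace Ω where
  MeasurableSet' B := x ∈ B ↔ y ∈ B
  measurableSet_empty := Iff.rfl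
  measurableSet_compl _ h := not_congr h
  measurableSet_iUnion _ h := by simp only [Set.mem_iUnion, h]

theorem MeasurableSpace.mem_iff_mem_of_generateFrom {C : Set (Set Ω)} {x y : Ω}
    (hC : ∀ B ∈ C, x ∈ B ↔ y ∈ B) {B : Set Ω} (hB : MeasurableSet[generateFrom C] B) :
    x ∈ B ↔ y ∈ B :=
  generateFrom_le (m := nonSeparating x y) hC B hB

theorem MeasureTheory.IsSetSemiring.exists_mem_subset_diff {C : Set (Set Ω)}
    (hC : IsSetSemiring C) {s t : Set Ω} (hs : s ∈ C) (ht : t ∈ C) {ω : Ω}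
    (hω : ω ∈ s \ t) :
    ∃ u ∈ C, ω ∈ u ∧ u ⊆ s \ t := by
  rw [← hC.sUnion_disjointOfDiff hs ht] at hω
  obtain ⟨u, hu, hωu⟩ := hω
  exact ⟨u, hC.subset_disjointOfDiff hs ht hu, hωu,
    hC.sUnion_disjointOfDiff hs ht ▸ Set.subset_sUnion_of_mem hu⟩

theorem MeasureTheory.IsSetSemiring.mem_iff_mem_of_mem_atomOf {C : Set (Set Ω)}
    (hC : IsSetSemiring C) (hΩ : Set.univ ∈ C) {ω x : Ω} (hx : x ∈ atomOf C ω)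
    {B : Set Ω} (hB : B ∈ C) :
    x ∈ B ↔ ω ∈ B := by
  rw [mem_atomOf_iff ⟨_, hΩ, trivial⟩] at hx
  refine ⟨fun hxB => by_contra fun hωB => ?_, hx B hB⟩
  obtain ⟨u, hu, hωu, hu_sub⟩ := hC.exists_mem_subset_diff hΩ hB ⟨trivial, hωB⟩
  exact (hu_sub (hx u hu hωu)).2 hxB

theorem atom_eq_of_semialgebra (C : Set (Set Ω)) (hC : IsSetSemiring C)
    (hΩ : (Set.univ : Set Ω) ∈ C) (ω : Ω) :
    atomOf (sigmaSets C) ω = atomOf C ω := by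
  have hC_sub : C ⊆ sigmaSets C := fun _ => MeasurableSpace.measurableSet_generateFrom (s := C)
  ext x
  rw [mem_atomOf_iff ⟨_, hC_sub hΩ, trivial⟩]
  refine ⟨fun hx => (mem_atomOf_iff ⟨_, hΩ, trivial⟩).2 fun B hB => hx B (hC_sub hB), ?_⟩
  intro hx B hB hωB
  exact (MeasurableSpace.mem_iff_mem_of_generateFrom
    (fun _ => hC.mem_iff_mem_of_mem_atomOf hΩ hx) hB).2 hωB
end

section
/- Let Ω be a set and C a nonempty collection of subsets of Ω. Then κ(C) = σ(C) if and only if for every A ∈ C the complement A^c belongs to κ(C). -/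
open MeasureTheory Classical

variable {Ω : Type*}

/-! If every member of `C` has its complement in `κ(C)`, then the members of `κ(C)` whose complement
also lies in `κ(C)` form a κ class containing `C` (complementation swaps countable unions and
intersections), so `κ(C)` is closed under complements. It also contains `∅ = A ∩ Aᶜ` for any
`A ∈ C`, hence is a σ-algebra containing `C`, and so contains `σ(C)`. Conversely, `σ(C)` is a κ class,
so `κ(C) ⊆ σ(C)` always, and `σ(C)` is closed under complements. -/

lemma subset_kappa (C : Set (Set Ω)) : C ⊆ kappa C := fun _ hA _ hK => hK.2 hA

lemma isKappaClass_kappa (C : Set (Set Ω)) : IsKappaClass (kappa C) :=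
  ⟨fun f hf _ hK => hK.1.1 f fun n => hf n _ hK, fun f hf _ hK => hK.1.2 f fun n => hf n _ hK⟩

lemma kappa_subset_of_isKappaClass {C K : Set (Set Ω)} (hK : IsKappaClass K) (hCK : C ⊆ K) :
    kappa C ⊆ K := fun _ hA => hA K ⟨hK, hCK⟩

lemma IsKappaClass.inter_mem {K : Set (Set Ω)} (hK : IsKappaClass K) {A B : Set Ω}
    (hA : A ∈ K) (hB : B ∈ K) : A ∩ B ∈ K := by
  have hAB : A ∩ B = ⋂ n : ℕ, if n = 0 then A else B := by
    ext x
    simp only [Set.mem_inter_iff, Set.mem_iInter]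
    refine ⟨fun hx n => ?_, fun hx => ⟨by simpa using hx 0, by simpa using hx 1⟩⟩
    split_ifs
    exacts [hx.1, hx.2]
  rw [hAB]
  exact hK.2 _ fun n => by split_ifs <;> assumption

lemma IsKappaClass.setOf_compl_mem {K : Set (Set Ω)} (hK : IsKappaClass K) :
    IsKappaClass {A | A ∈ K ∧ Aᶜ ∈ K} := by
  refine ⟨fun f hf => ⟨hK.1 f fun n => (hf n).1, ?_⟩, fun f hf => ⟨hK.2 f fun n => (hf n).1, ?_⟩⟩
  · rw [Set.compl_iUnion]
    exact hK.2 _ fun n => (hf n).2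
  · rw [Set.compl_iInter]
    exact hK.1 _ fun n => (hf n).2

lemma compl_mem_kappa {C : Set (Set Ω)} (h : ∀ A ∈ C, Aᶜ ∈ kappa C) {s : Set Ω}
    (hs : s ∈ kappa C) : sᶜ ∈ kappa C :=
  (kappa_subset_of_isKappaClass (isKappaClass_kappa C).setOf_compl_mem
    (fun A hA => ⟨subset_kappa C hA, h A hA⟩) hs).2

lemma isKappaClass_sigmaSets (C : Set (Set Ω)) : IsKappaClass (sigmaSets C) :=
  ⟨fun _ hf => MeasurableSet.iUnion (m := MeasurableSpace.generateFrom C) hf,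
    fun _ hf => MeasurableSet.iInter (m := MeasurableSpace.generateFrom C) hf⟩

lemma subset_sigmaSets (C : Set (Set Ω)) : C ⊆ sigmaSets C :=
  fun _ hA => MeasurableSpace.measurableSet_generateFrom hA

lemma kappa_subset_sigmaSets (C : Set (Set Ω)) : kappa C ⊆ sigmaSets C :=
  kappa_subset_of_isKappaClass (isKappaClass_sigmaSets C) (subset_sigmaSets C)

lemma sigmaSets_subset_kappa {C : Set (Set Ω)} (hC : C.Nonempty)
    (h : ∀ A ∈ C, Aᶜ ∈ kappa C) : sigmaSets C ⊆ kappa C := by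
  obtain ⟨A, hA⟩ := hC
  have hempty : ∅ ∈ kappa C := by
    rw [← Set.inter_compl_self A]
    exact (isKappaClass_kappa C).inter_mem (subset_kappa C hA) (h A hA)
  intro s hs
  induction hs with
  | basic t ht => exact subset_kappa C ht
  | empty => exact hempty
  | compl t _ ih => exact compl_mem_kappa h ih
  | iUnion f _ ih => exact (isKappaClass_kappa C).1 f ih

theorem kappa_eq_sigma_iff (C : Set (Set Ω)) (hC : C.Nonempty) :
    kappa C = sigmaSets C ↔ ∀ A ∈ C, Aᶜ ∈ kappa C := by
  refine ⟨fun h A hA => ?_, fun h => ?_⟩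
  · rw [h]
    exact (MeasurableSpace.measurableSet_generateFrom hA).compl
  · exact (kappa_subset_sigmaSets C).antisymm (sigmaSets_subset_kappa hC h)
end

section
/- Let Ω be a set and C a countable set semi-ring on Ω, and let F = σ(C). Then A_F(ω) = A_C(ω) for every ω ∈ Ω if and only if Ω is a countable union of members of C (i.e., Ω ∈ C_σ). -/
open MeasureTheory Classical

variable {Ω : Type*}

/-! If `ω` lies in some member `E` of the semiring `C`, its `C`-atom `A` is either contained in or
disjoint from every `B ∈ C`: when `ω ∉ B`, the piece of `E \ B` that contains `ω` contains `A`.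
The sets that contain or miss `A` form a σ-algebra, so this dichotomy extends to all of `σ(C)`,
and `A` is the `σ(C)`-atom as well. Conversely `ω` always lies in its `σ(C)`-atom, so equal atoms
force `C` to cover `Ω`, and a cover by the countable `C` is a member of `C_σ`. -/

section Atoms

variable {C D : Set (Set Ω)} {ω : Ω}

lemma atomOf_subset {B : Set Ω} (hB : B ∈ C) (hω : ω ∈ B) : atomOf C ω ⊆ B := by
  rw [atomOf, if_pos ⟨B, hB, hω⟩]
  exact Set.sInter_subset_of_mem ⟨hB, hω⟩

lemma subset_atomOf_iff {A : Set Ω} (h : ∃ B ∈ C, ω ∈ B) :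
    A ⊆ atomOf C ω ↔ ∀ B ∈ C, ω ∈ B → A ⊆ B := by
  rw [atomOf, if_pos h, Set.subset_sInter_iff]
  exact ⟨fun hA B hB hω => hA B ⟨hB, hω⟩, fun hA B hB => hA B hB.1 hB.2⟩

lemma mem_atomOf_self_iff : ω ∈ atomOf C ω ↔ ∃ B ∈ C, ω ∈ B := by
  by_cases h : ∃ B ∈ C, ω ∈ B
  · simpa [h] using (subset_atomOf_iff h).2 fun B _ hω => Set.singleton_subset_iff.2 hω
  · rw [atomOf, if_neg h]
    exact iff_of_false (Set.notMem_empty ω) h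

lemma atomOf_subset_atomOf (hCD : C ⊆ D) (h : ∃ B ∈ C, ω ∈ B) : atomOf D ω ⊆ atomOf C ω :=
  (subset_atomOf_iff h).2 fun _ hB hω => atomOf_subset (hCD hB) hω

lemma MeasureTheory.IsSetSemiring.disjoint_atomOf (hC : IsSetSemiring C) (h : ∃ E ∈ C, ω ∈ E)
    {B : Set Ω} (hB : B ∈ C) (hωB : ω ∉ B) : Disjoint (atomOf C ω) B := by
  obtain ⟨E, hE, hωE⟩ := h
  obtain ⟨I, hIC, -, hEB⟩ := hC.sdiff_eq_sUnion' E hE B hB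
  obtain ⟨D, hDI, hωD⟩ : ω ∈ ⋃₀ (I : Set (Set Ω)) := hEB ▸ ⟨hωE, hωB⟩
  have hD : D ⊆ E \ B := hEB ▸ Set.subset_sUnion_of_mem hDI
  exact Set.disjoint_of_subset_left ((atomOf_subset (hIC hDI) hωD).trans hD) Set.disjoint_sdiff_left

end Atoms

lemma subset_or_disjoint_of_measurableSet_generateFrom {C : Set (Set Ω)} {A s : Set Ω}
    (hC : ∀ t ∈ C, A ⊆ t ∨ Disjoint A t) (hs : MeasurableSet[MeasurableSpace.generateFrom C] s) :
    A ⊆ s ∨ Disjoint A s := by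
  induction s, hs using MeasurableSpace.generateFrom_induction with
  | hC t ht => exact hC t ht
  | empty => exact Or.inr (Set.disjoint_empty A)
  | compl t _ ht =>
    exact ht.symm.imp Set.subset_compl_iff_disjoint_right.2 Set.disjoint_compl_right_iff_subset.2
  | iUnion s _ hs =>
    by_cases hsub : ∃ n, A ⊆ s n
    · obtain ⟨n, hn⟩ := hsub
      exact Or.inl (hn.trans (Set.subset_iUnion s n))
    · push Not at hsub
      exact Or.inr (Set.disjoint_iUnion_right.2 fun n => (hs n).resolve_left (hsub n))

lemma MeasureTheory.IsSetSemiring.atomOf_sigmaSets_eq_iff {C : Set (Set Ω)}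
    (hC : IsSetSemiring C) (ω : Ω) : atomOf (sigmaSets C) ω = atomOf C ω ↔ ∃ B ∈ C, ω ∈ B := by
  have hcov : ∃ B ∈ sigmaSets C, ω ∈ B :=
    ⟨Set.univ, MeasurableSet.univ (m := MeasurableSpace.generateFrom C), Set.mem_univ ω⟩
  refine ⟨fun h => mem_atomOf_self_iff.1 (h ▸ mem_atomOf_self_iff.2 hcov), fun h => ?_⟩
  refine (atomOf_subset_atomOf
    (fun B hB => MeasurableSpace.measurableSet_generateFrom hB) h).antisymm ?_
  refine (subset_atomOf_iff hcov).2 fun B hB hωB => ?_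
  have hsplit : ∀ t ∈ C, atomOf C ω ⊆ t ∨ Disjoint (atomOf C ω) t := fun t ht =>
    (Classical.em (ω ∈ t)).imp (atomOf_subset ht) (hC.disjoint_atomOf h ht)
  exact (subset_or_disjoint_of_measurableSet_generateFrom hsplit hB).resolve_right
    fun hdisj => hdisj.notMem_of_mem_left (mem_atomOf_self_iff.2 h) hωB

lemma univ_mem_sigmaUnions_iff {C : Set (Set Ω)} (hcount : C.Countable) (hne : C.Nonempty) :
    Set.univ ∈ sigmaUnions C ↔ ∀ ω, ∃ B ∈ C, ω ∈ B := by
  constructor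
  · rintro ⟨f, hf, hfu⟩ ω
    obtain ⟨n, hn⟩ := Set.mem_iUnion.1 (hfu ▸ Set.mem_univ ω)
    exact ⟨f n, hf n, hn⟩
  · intro hcov
    obtain ⟨f, rfl⟩ := hcount.exists_eq_range hne
    refine ⟨f, fun n => ⟨n, rfl⟩, (Set.eq_univ_of_forall fun ω => ?_).symm⟩
    obtain ⟨_, ⟨n, rfl⟩, hω⟩ := hcov ω
    exact Set.mem_iUnion.2 ⟨n, hω⟩

theorem atom_eq_iff_univ_mem_sigmaUnions (C : Set (Set Ω)) (hC : IsSetSemiring C)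
    (hcount : C.Countable) :
    (∀ ω : Ω, atomOf (sigmaSets C) ω = atomOf C ω) ↔ (Set.univ : Set Ω) ∈ sigmaUnions C := by
  simp only [hC.atomOf_sigmaSets_eq_iff, univ_mem_sigmaUnions_iff hcount ⟨∅, hC.empty_mem⟩]
end
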